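/- Let G be a group with finite symmetric generating set X. If the set Geo(G,X) of geodesic words is recursive (membership is decidable) and the set of words over X that represent the identity of G is recursively enumerable, then the set of words over X representing the identity of G is recursive; that is, G has solvable word problem. -/

import Mathlib

/-!
The word problem is recursively enumerable by hypothesis, so by Post's theorem it suffices to
enumerate the words `w` with `w ≠ 1`. Such a `w` represents the same element as some geodesic
word `v`, and `v` is nonempty because the empty word represents `1`; conversely, a nonempty
geodesic never represents `1`. Hence `w ≠ 1` iff some nonempty geodesic `v` satisfies
`w v⁻¹ = 1`, which is a search over `v` for a decidable condition on `v` and an enumerable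
condition on `w v⁻¹`.
-/

open Encodable Nat.Partrec.Code

section Computability

variable {α β : Type*} [Primcodable α] [Primcodable β]

theorem ComputablePred.and {p q : α → Prop} (hp : ComputablePred p) (hq : ComputablePred q) :
    ComputablePred fun a => p a ∧ q a := by
  obtain ⟨_, hp⟩ := hp
  obtain ⟨_, hq⟩ := hq
  exact Computable.computablePred <| (Primrec.and.to_comp.comp hp hq).of_eq fun a => by simp

theorem ComputablePred.comp {p : β → Prop} (hp : ComputablePred p) {f : α → β}
    (hf : Computable f) : ComputablePred fun a => p (f a) :=
  ComputablePred.computable_of_manyOneReducible ⟨f, hf, fun _ => Iff.rfl⟩ hp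

theorem REPred.comp {p : β → Prop} (hp : REPred p) {f : α → β} (hf : Computable f) :
    REPred fun a => p (f a) :=
  Partrec.comp hp hf

theorem ComputablePred.rePred_exists {p : α × β → Prop} (hp : ComputablePred p) :
    REPred fun a => ∃ b, p (a, b) := by
  obtain ⟨f, hf, hpf⟩ := ComputablePred.computable_iff.1 hp
  let witness : α → ℕ → Option β := fun a n =>
    (decode n).bind fun b => bif f (a, b) then some b else none
  have hwitness : Computable₂ witness :=
    Computable.option_bind (Computable.decode.comp Computable.snd)
      (Computable.cond (hf.comp ((Computable.fst.comp Computable.fst).pair Computable.snd))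
        (Computable.option_some.comp Computable.snd) (Computable.const none))
  refine (Partrec.rfindOpt hwitness).dom_re.of_eq fun a => ?_
  have hp_iff (b : β) : p (a, b) ↔ f (a, b) = true := iff_of_eq (congrFun hpf (a, b))
  simp only [Nat.rfindOpt_dom, witness, Option.mem_def, Option.bind_eq_some_iff, hp_iff,
    Bool.cond_eq_ite, Option.ite_none_right_eq_some, Option.some_inj]
  constructor
  · rintro ⟨-, -, b, -, hb, -⟩
    exact ⟨b, hb⟩
  · rintro ⟨b, hb⟩
    exact ⟨encode b, b, b, encodek b, hb, rfl⟩

theorem REPred.exists_computablePred {p : α → Prop} (hp : REPred p) :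
    ∃ q : α → ℕ → Prop, ComputablePred (fun x : α × ℕ => q x.1 x.2) ∧ ∀ a, p a ↔ ∃ n, q a n := by
  obtain ⟨c, hc⟩ := exists_code.1 hp
  refine ⟨fun a k => (evaln k c (encode a)).isSome, ?_, fun a => ?_⟩
  · refine Computable.computablePred (Primrec.to_comp ?_)
    exact Primrec.option_isSome.comp (primrec_evaln.comp
      ((Primrec.snd.pair (Primrec.const c)).pair (Primrec.encode.comp Primrec.fst)))
      |>.of_eq fun x => by simp
  · calc p a ↔ (eval c (encode a)).Dom := by
          rw [hc]
          simp only [encodek, Part.coe_some, Part.bind_some, Part.map_Dom]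
          exact ⟨fun h => ⟨h, trivial⟩, fun ⟨h, _⟩ => h⟩
      _ ↔ ∃ k x, x ∈ evaln k c (encode a) := by
          rw [Part.dom_iff_mem, exists_comm]
          simp only [evaln_complete]
      _ ↔ _ := by simp [Option.isSome_iff_exists]

theorem REPred.exists {p : α × β → Prop} (hp : REPred p) :
    REPred fun a => ∃ b, p (a, b) := by
  obtain ⟨q, hq, hpq⟩ := hp.exists_computablePred
  have hq' : ComputablePred fun x : α × (β × ℕ) => q (x.1, x.2.1) x.2.2 :=
    hq.comp ((Computable.fst.pair (Computable.fst.comp Computable.snd)).pair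
      (Computable.snd.comp Computable.snd))
  exact hq'.rePred_exists.of_eq fun a => by simp only [hpq, Prod.exists]

theorem REPred.computablePred_and {p q : α → Prop} (hp : ComputablePred p) (hq : REPred q) :
    REPred fun a => p a ∧ q a := by
  obtain ⟨r, hr, hqr⟩ := hq.exists_computablePred
  have hpr : ComputablePred fun x : α × ℕ => p x.1 ∧ r x.1 x.2 := (hp.comp Computable.fst).and hr
  exact hpr.rePred_exists.of_eq fun a => by simp only [hqr, exists_and_left]

end Computability

section Geodesics

variable {G ι : Type*} [Group G] (π : ι → G)

def IsGeodesic (w : List ι) : Prop :=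
  ∀ v : List ι, (v.map π).prod = (w.map π).prod → w.length ≤ v.length

variable {π}

theorem exists_isGeodesic (w : List ι) :
    ∃ v, (v.map π).prod = (w.map π).prod ∧ IsGeodesic π v := by
  obtain ⟨v, hv, hmin⟩ := (measure List.length).wf.has_min
    {v | (v.map π).prod = (w.map π).prod} ⟨w, rfl⟩
  exact ⟨v, hv, fun u hu => not_lt.1 (hmin u (hu.trans hv))⟩

theorem IsGeodesic.eq_nil_of_prod_eq_one {v : List ι} (hv : IsGeodesic π v)
    (h : (v.map π).prod = 1) : v = [] :=
  List.eq_nil_of_length_eq_zero (Nat.le_zero.1 (hv [] (by simp [h])))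

theorem prod_map_reverse_map_of_inv {σ : ι → ι} (hσ : ∀ i, π (σ i) = (π i)⁻¹) (v : List ι) :
    (((v.map σ).reverse).map π).prod = ((v.map π).prod)⁻¹ := by
  simp [List.prod_inv_reverse, List.map_reverse, Function.comp_def, hσ]

theorem prod_ne_one_iff_exists_isGeodesic {σ : ι → ι} (hσ : ∀ i, π (σ i) = (π i)⁻¹)
    (w : List ι) : (w.map π).prod ≠ 1 ↔
      ∃ v, (IsGeodesic π v ∧ v ≠ []) ∧ ((w ++ (v.map σ).reverse).map π).prod = 1 := by
  simp only [List.map_append, List.prod_append, prod_map_reverse_map_of_inv hσ, mul_inv_eq_one]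
  constructor
  · intro hw
    obtain ⟨v, hvw, hv⟩ := exists_isGeodesic (π := π) w
    exact ⟨v, ⟨hv, by rintro rfl; exact hw (by simpa using hvw.symm)⟩, hvw.symm⟩
  · rintro ⟨v, ⟨hv, hv_ne⟩, hwv⟩ hw
    exact hv_ne (hv.eq_nil_of_prod_eq_one (hwv ▸ hw))

end Geodesics

theorem stmt11_general {G : Type*} [Group G] (m : ℕ) (π : Fin m → G)
    (hsym : ∀ i : Fin m, ∃ j : Fin m, π j = (π i)⁻¹)
    (hgeo : ComputablePred fun w : List (Fin m) =>
      ∀ v : List (Fin m), (v.map π).prod = (w.map π).prod → w.length ≤ v.length)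
    (hre : REPred fun w : List (Fin m) => (w.map π).prod = 1) :
    ComputablePred fun w : List (Fin m) => (w.map π).prod = 1 := by
  choose σ hσ using hsym
  have hgeo_ne : ComputablePred fun x : List (Fin m) × List (Fin m) =>
      IsGeodesic π x.2 ∧ x.2 ≠ [] :=
    (hgeo.comp Computable.snd).and
      (Primrec.eq.comp Primrec.snd (Primrec.const [])).computablePred.not
  have hmul_inv : Computable fun x : List (Fin m) × List (Fin m) => x.1 ++ (x.2.map σ).reverse :=
    (Primrec.list_append.comp Primrec.fst (Primrec.list_reverse.comp
      (Primrec.list_map Primrec.snd ((Primrec.dom_finite σ).comp Primrec.snd).to₂))).to_comp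
  have hne_one : REPred fun w : List (Fin m) => (w.map π).prod ≠ 1 :=
    (REPred.exists (hre.comp hmul_inv |>.computablePred_and hgeo_ne)).of_eq
      fun w => (prod_ne_one_iff_exists_isGeodesic hσ w).symm
  exact ComputablePred.computable_iff_re_compl_re'.2 ⟨hre, hne_one⟩

/-- If the set of geodesic words of a group `G` (with letters indexed by the effectively
encodable alphabet `Fin m`, mapping onto a symmetric generating set via `π`) is
recursive, and the set of words representing the identity is recursively enumerable,
then the set of words representing the identity is recursive: `G` has solvable word
problem. -/
theorem stmt11 {G : Type*} [Group G] (m : ℕ) (π : Fin m → G)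
    (hsym : ∀ i : Fin m, ∃ j : Fin m, π j = (π i)⁻¹)
    (hgen : Subgroup.closure (Set.range π) = ⊤)
    (hgeo : ComputablePred fun w : List (Fin m) =>
      ∀ v : List (Fin m), (v.map π).prod = (w.map π).prod → w.length ≤ v.length)
    (hre : REPred fun w : List (Fin m) => (w.map π).prod = 1) :
    ComputablePred fun w : List (Fin m) => (w.map π).prod = 1 :=
  stmt11_general m π hsym hgeo hre
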